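/- arXiv:1808.01604 — 6 statements merged into one kernel-verified Lean document; each statement's English description precedes it below -/
import Mathlib

section
/- For every r > 0 and every polynomial P of degree at most n with sup norm at most 1 on the closed unit disk, and every z on the unit circle, the mean value (1/2π)∫₀^{2π} |P(z + r e^{iθ})|² dθ is at most ∑_{k=0}^n (C(n,k))² r^{2k}, with equality for P(z) = z^n. -/
/-!
The mean of `|P|²` over the circle `|w - z| = r` is `∑ₖ |cₖ|² r^{2k}` (Parseval), where
`cₖ = P^{(k)}(z) / k!` are the Taylor coefficients of `P` at `z`. Iterating Bernstein's inequality
`‖P'‖ ≤ n ‖P‖` on the unit circle gives `|P^{(k)}(z)| ≤ n!/(n-k)!`, i.e. `|cₖ| ≤ C(n,k)`, with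
equality for `P = Xⁿ`. Bernstein's inequality itself comes from representing `z P'(z)` as the
integral of `P(z e^{-it}) e^{int}` against the nonnegative Fejér kernel, whose mass is `n`.
-/

open Polynomial Real intervalIntegral Complex Finset

theorem integral_exp_int_mul_I (m : ℤ) :
    ∫ t in (0:ℝ)..2 * π, exp (m * t * I) = if m = 0 then (2 * π : ℂ) else 0 := by
  split_ifs with hm
  · simp [hm]
  have hmI : (m : ℂ) * I ≠ 0 := by simp [hm]
  have hperiod : exp (m * I * (2 * π : ℝ)) = 1 := by
    rw [← exp_int_mul_two_pi_mul_I m]; push_cast; ring_nf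
  simp_rw [mul_right_comm _ _ I]
  rw [integral_exp_mul_complex hmI, hperiod]
  simp

theorem integral_sum_exp_int_mul_I {ι : Type*} (s : Finset ι) (c : ι → ℂ) (m : ι → ℤ) :
    ∫ t in (0:ℝ)..2 * π, ∑ i ∈ s, c i * exp (m i * t * I) =
      2 * π * ∑ i ∈ s with m i = 0, c i := by
  rw [integral_finsetSum fun i _ => by apply Continuous.intervalIntegrable; fun_prop]
  simp only [integral_const_mul, integral_exp_int_mul_I, mul_ite, mul_zero]
  rw [← sum_filter, ← sum_mul, mul_comm]

/-- `n` times the Fejér kernel `F_n` in its usual normalisation. -/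
noncomputable def fejerKernel (n : ℕ) (t : ℝ) : ℝ := ‖∑ j ∈ range n, exp (j * t * I)‖ ^ 2

theorem ofReal_fejerKernel (n : ℕ) (t : ℝ) :
    (fejerKernel n t : ℂ) = ∑ p ∈ range n ×ˢ range n, exp (((p.1 - p.2 : ℤ) : ℂ) * t * I) := by
  rw [fejerKernel, ofReal_pow, ← mul_conj', map_sum, sum_mul_sum, sum_product]
  refine sum_congr rfl fun j _ => sum_congr rfl fun l _ => ?_
  rw [← exp_conj, ← Complex.exp_add]
  congr 1
  simp only [map_mul, conj_I, conj_ofReal, map_natCast]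
  push_cast
  ring

theorem continuous_fejerKernel (n : ℕ) : Continuous (fejerKernel n) := by
  unfold fejerKernel; fun_prop

theorem integral_fejerKernel (n : ℕ) : ∫ t in (0:ℝ)..2 * π, fejerKernel n t = 2 * π * n := by
  apply Complex.ofReal_injective
  have hdiag : {p ∈ range n ×ˢ range n | ((p.1 : ℤ) - p.2) = 0} = (range n).diag := by
    ext p; simp only [mem_filter, mem_product, mem_diag, sub_eq_zero, Nat.cast_inj]; grind
  have := integral_sum_exp_int_mul_I (range n ×ˢ range n) 1 (fun p => p.1 - p.2)
  simp only [Pi.one_apply, one_mul, hdiag, sum_const, diag_card, card_range] at this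
  push_cast
  rw [← integral_ofReal]
  simpa [ofReal_fejerKernel] using this

theorem card_filter_add_eq_add {n k : ℕ} (hk : k ≤ n) :
    #{p ∈ range n ×ˢ range n | p.1 + n = p.2 + k} = k := by
  have : {p ∈ range n ×ˢ range n | p.1 + n = p.2 + k} =
      (range k).image fun j => (j, j + n - k) := by
    ext ⟨j, l⟩
    simp only [mem_filter, mem_product, mem_range, mem_image, Prod.mk.injEq]
    constructor
    · rintro ⟨⟨hj, hl⟩, h⟩; exact ⟨j, by omega, rfl, by omega⟩
    · rintro ⟨j', hj', rfl, rfl⟩; omega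
  rw [this, card_image_of_injective _ fun a b h => (Prod.ext_iff.1 h).1, card_range]

theorem Polynomial.mul_eval_derivative {R : Type*} [CommSemiring R] {P : R[X]} {n : ℕ}
    (hP : P.natDegree ≤ n) (z : R) :
    z * P.derivative.eval z = ∑ k ∈ range (n + 1), k * P.coeff k * z ^ k := by
  rw [derivative_eval, P.sum_over_range' (by simp) (n + 1) (Nat.lt_succ_of_le hP), mul_sum]
  refine sum_congr rfl fun k _ => ?_
  cases k with
  | zero => simp
  | succ k => rw [Nat.add_sub_cancel, pow_succ']; ring

/-- Since `|D_n(t)|² = ∑_{|m|<n} (n - |m|) e^{imt}` and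
`P(z e^{-it}) e^{int} = ∑ₖ aₖ zᵏ e^{i(n-k)t}`, the integral picks up `(n - (n - k)) aₖ zᵏ = k aₖ zᵏ`. -/
theorem integral_eval_mul_fejerKernel {P : ℂ[X]} {n : ℕ} (hP : P.natDegree ≤ n) (z : ℂ) :
    ∫ t in (0:ℝ)..2 * π, P.eval (z * exp (-(t * I))) * exp (n * t * I) * fejerKernel n t =
      2 * π * (z * P.derivative.eval z) := by
  have hexpand (t : ℝ) : P.eval (z * exp (-(t * I))) * exp (n * t * I) * fejerKernel n t =
      ∑ x ∈ range (n + 1) ×ˢ (range n ×ˢ range n),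
        P.coeff x.1 * z ^ x.1 * exp (((n + x.2.1 - x.1 - x.2.2 : ℤ) : ℂ) * t * I) := by
    rw [ofReal_fejerKernel, eval_eq_sum_range' (Nat.lt_succ_of_le hP), sum_mul, sum_mul_sum,
      sum_product]
    refine sum_congr rfl fun k _ => sum_congr rfl fun p _ => ?_
    rw [mul_pow, ← Complex.exp_nat_mul, mul_assoc, mul_assoc, ← Complex.exp_add, mul_assoc,
      ← Complex.exp_add]
    push_cast
    ring_nf
  simp_rw [hexpand]
  rw [integral_sum_exp_int_mul_I, sum_filter, sum_product, mul_eval_derivative hP]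
  congr 1
  refine sum_congr rfl fun k hk => ?_
  dsimp only
  have hcount : {p ∈ range n ×ˢ range n | (n + p.1 - k - p.2 : ℤ) = 0} =
      {p ∈ range n ×ˢ range n | p.1 + n = p.2 + k} := filter_congr fun _ _ => by omega
  rw [← sum_filter, sum_const, hcount, card_filter_add_eq_add (Nat.lt_succ_iff.1 (mem_range.1 hk)),
    nsmul_eq_mul, mul_assoc]

theorem fejerKernel_nonneg (n : ℕ) (t : ℝ) : 0 ≤ fejerKernel n t := sq_nonneg _

theorem Polynomial.norm_derivative_eval_le {P : ℂ[X]} {n : ℕ} (hP : P.natDegree ≤ n) {M : ℝ}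
    (hM : ∀ w : ℂ, ‖w‖ = 1 → ‖P.eval w‖ ≤ M) {z : ℂ} (hz : ‖z‖ = 1) :
    ‖P.derivative.eval z‖ ≤ n * M := by
  have hpointwise (t : ℝ) :
      ‖P.eval (z * exp (-(t * I))) * exp (n * t * I) * fejerKernel n t‖ ≤ M * fejerKernel n t := by
    have hw : ‖z * exp (-(t * I))‖ = 1 := by simp [norm_exp, hz]
    have hrot : ‖exp (n * t * I)‖ = 1 := by simp [norm_exp]
    rw [norm_mul, norm_mul, hrot, mul_one, norm_real, Real.norm_of_nonneg (fejerKernel_nonneg n t)]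
    exact mul_le_mul_of_nonneg_right (hM _ hw) (fejerKernel_nonneg n t)
  have hbound := norm_integral_le_of_norm_le two_pi_pos.le (.of_forall fun t _ => hpointwise t)
    (((continuous_fejerKernel n).const_mul M).intervalIntegrable (μ := MeasureTheory.volume) _ _)
  have hnorm : ‖(2 * π : ℂ) * (z * P.derivative.eval z)‖ = 2 * π * ‖P.derivative.eval z‖ := by
    simp [hz, pi_pos.le]
  rw [integral_eval_mul_fejerKernel hP, integral_const_mul, integral_fejerKernel, hnorm] at hbound
  exact le_of_mul_le_mul_left (by linarith) two_pi_pos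

theorem Polynomial.norm_iterate_derivative_eval_le (k : ℕ) {P : ℂ[X]} {n : ℕ}
    (hP : P.natDegree ≤ n) {M : ℝ} (hM : ∀ w : ℂ, ‖w‖ = 1 → ‖P.eval w‖ ≤ M) {z : ℂ}
    (hz : ‖z‖ = 1) : ‖(derivative^[k] P).eval z‖ ≤ n.descFactorial k * M := by
  induction k generalizing n M P with
  | zero => simpa using hM z hz
  | succ k ih =>
    have hP' : P.derivative.natDegree ≤ n - 1 := (natDegree_derivative_le P).trans (by omega)
    have hdesc : (n.descFactorial (k + 1) : ℝ) = (n - 1).descFactorial k * n := by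
      cases n with
      | zero => simp
      | succ m => push_cast [Nat.succ_descFactorial_succ]; ring
    rw [Function.iterate_succ_apply, hdesc, mul_assoc]
    exact ih hP' (fun w hw => norm_derivative_eval_le hP hM hw)

theorem Polynomial.norm_taylor_coeff_le {P : ℂ[X]} {n : ℕ} (hP : P.natDegree ≤ n) {M : ℝ}
    (hM : ∀ w : ℂ, ‖w‖ = 1 → ‖P.eval w‖ ≤ M) {z : ℂ} (hz : ‖z‖ = 1) (k : ℕ) :
    ‖(taylor z P).coeff k‖ ≤ n.choose k * M := by
  have hderiv : (derivative^[k] P).eval z = (k.factorial : ℂ) * (taylor z P).coeff k := by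
    rw [taylor_coeff, ← factorial_smul_hasseDeriv, LinearMap.smul_apply, eval_smul, nsmul_eq_mul]
  have hbound := norm_iterate_derivative_eval_le k hP hM hz
  rw [hderiv, norm_mul, Complex.norm_natCast, Nat.descFactorial_eq_factorial_mul_choose,
    Nat.cast_mul, mul_assoc] at hbound
  exact le_of_mul_le_mul_left hbound (by positivity)

theorem Polynomial.sum_range_sq_norm_coeff_eq_circleAverage {p : ℂ[X]} {N : ℕ}
    (hp : p.natDegree < N) :
    ∑ i ∈ range N, ‖p.coeff i‖ ^ 2 = circleAverage (fun w => ‖p.eval w‖ ^ 2) 0 1 := by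
  rw [← sum_sq_norm_coeff_eq_circleAverage]
  exact (sum_subset (supp_subset_range hp) fun i _ hi => by simp [notMem_support_iff.1 hi]).symm

theorem Polynomial.circleAverage_sq_norm_eval {P : ℂ[X]} {n : ℕ} (hP : P.natDegree ≤ n)
    (z : ℂ) (r : ℝ) :
    circleAverage (fun w => ‖P.eval w‖ ^ 2) z r =
      ∑ k ∈ range (n + 1), ‖(taylor z P).coeff k‖ ^ 2 * r ^ (2 * k) := by
  set Q := (taylor z P).comp (C (r : ℂ) * X)
  have hQ : Q.natDegree < n + 1 := by
    refine natDegree_comp_le.trans_lt (Nat.lt_succ_of_le ?_)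
    rw [natDegree_taylor]
    exact (Nat.mul_le_mul hP ((natDegree_C_mul_le _ X).trans natDegree_X_le)).trans (mul_one n).le
  have hQeval (w : ℂ) : P.eval (r * w + z) = Q.eval w := by simp [Q, eval_comp, taylor_eval]
  rw [circleAverage_eq_circleAverage_zero_one]
  simp_rw [hQeval]
  rw [← sum_range_sq_norm_coeff_eq_circleAverage hQ]
  refine sum_congr rfl fun k _ => ?_
  rw [comp_C_mul_X_coeff, norm_mul, norm_pow, norm_real, Real.norm_eq_abs, mul_pow, ← pow_mul,
    mul_comm k 2, pow_mul, pow_mul, sq_abs]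

theorem Polynomial.norm_taylor_X_pow_coeff (z : ℂ) (n k : ℕ) :
    ‖(taylor z (X ^ n : ℂ[X])).coeff k‖ = n.choose k * ‖z‖ ^ (n - k) := by
  rw [taylor_coeff, X_pow_eq_monomial, hasseDeriv_monomial, eval_monomial, mul_one, norm_mul,
    norm_pow, Complex.norm_natCast]

theorem stmt0_general (n : ℕ) (r : ℝ) :
    (∀ P : Polynomial ℂ, P.natDegree ≤ n →
      (∀ w : ℂ, ‖w‖ ≤ 1 → ‖P.eval w‖ ≤ 1) →
      ∀ z : ℂ, ‖z‖ = 1 →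
        (1 / (2 * π)) * (∫ θ in (0:ℝ)..(2 * π),
            ‖P.eval (z + (r : ℂ) * Complex.exp (θ * Complex.I))‖ ^ 2)
          ≤ ∑ k ∈ Finset.range (n + 1), (n.choose k : ℝ) ^ 2 * r ^ (2 * k)) ∧
    (∀ z : ℂ, ‖z‖ = 1 →
      (1 / (2 * π)) * (∫ θ in (0:ℝ)..(2 * π),
          ‖(Polynomial.X ^ n : Polynomial ℂ).eval (z + (r : ℂ) * Complex.exp (θ * Complex.I))‖ ^ 2)
        = ∑ k ∈ Finset.range (n + 1), (n.choose k : ℝ) ^ 2 * r ^ (2 * k)) := by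
  have hmean (Q : ℂ[X]) (z : ℂ) :
      1 / (2 * π) * ∫ θ in (0:ℝ)..2 * π, ‖Q.eval (z + r * exp (θ * I))‖ ^ 2 =
        circleAverage (fun w => ‖Q.eval w‖ ^ 2) z r := by
    rw [circleAverage_def, smul_eq_mul, one_div]; rfl
  refine ⟨fun P hPn hP z hz => ?_, fun z hz => ?_⟩
  · rw [hmean, circleAverage_sq_norm_eval hPn]
    gcongr with k
    · exact (even_two_mul k).pow_nonneg r
    · simpa using norm_taylor_coeff_le hPn (fun w hw => hP w hw.le) hz k
  · rw [hmean, circleAverage_sq_norm_eval (natDegree_X_pow_le n)]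
    simp only [norm_taylor_X_pow_coeff, hz, one_pow, mul_one]

/-- For every `r > 0` and every polynomial `P` of degree at most `n` with
sup norm at most `1` on the closed unit disk, and every `z` on the unit circle, the mean
value `(1/2π) ∫₀^{2π} |P(z + r e^{iθ})|² dθ` is at most `∑_{k=0}^n C(n,k)² r^{2k}`,
with equality for `P = X^n`. -/
theorem stmt0 (n : ℕ) (r : ℝ) (hr : 0 < r) :
    (∀ P : Polynomial ℂ, P.natDegree ≤ n →
      (∀ w : ℂ, ‖w‖ ≤ 1 → ‖P.eval w‖ ≤ 1) →
      ∀ z : ℂ, ‖z‖ = 1 →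
        (1 / (2 * π)) * (∫ θ in (0:ℝ)..(2 * π),
            ‖P.eval (z + (r : ℂ) * Complex.exp (θ * Complex.I))‖ ^ 2)
          ≤ ∑ k ∈ Finset.range (n + 1), (n.choose k : ℝ) ^ 2 * r ^ (2 * k)) ∧
    (∀ z : ℂ, ‖z‖ = 1 →
      (1 / (2 * π)) * (∫ θ in (0:ℝ)..(2 * π),
          ‖(Polynomial.X ^ n : Polynomial ℂ).eval (z + (r : ℂ) * Complex.exp (θ * Complex.I))‖ ^ 2)
        = ∑ k ∈ Finset.range (n + 1), (n.choose k : ℝ) ^ 2 * r ^ (2 * k)) :=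
  stmt0_general n r
end

section
/- For all integers 1 ≤ l ≤ n, the quantity inf_{r>0} r^{-l} (∑_{k=0}^n C(n,k)² r^{2k})^{1/2} satisfies C(n,l) ≤ inf_{r>0} r^{-l} (∑_{k=0}^n C(n,k)² r^{2k})^{1/2} ≤ e^l C(n,l). -/
open Real

lemma pow_div_le_choose (l : ℕ) : ∀ n : ℕ, 1 ≤ l → l ≤ n →
    ((n : ℝ) / l) ^ l ≤ (n.choose l : ℝ) := by
  induction l with
  | zero => intro n h; omega
  | succ l ih =>
    intro n _ hln
    rcases Nat.eq_zero_or_pos l with rfl | hl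
    · simp
    · obtain ⟨m, rfl⟩ : ∃ m, n = m + 1 := ⟨n - 1, by omega⟩
      have hlm : l ≤ m := by omega
      have key : ((m+1 : ℕ)) * m.choose l = (m+1).choose (l+1) * (l+1) :=
        Nat.add_one_mul_choose_eq m l
      have keyR : ((m:ℝ)+1) * (m.choose l) = ((m+1).choose (l+1) : ℝ) * ((l:ℝ)+1) := by
        exact_mod_cast key
      have hchoose : ((m+1).choose (l+1) : ℝ) = ((m:ℝ)+1) * (m.choose l) / ((l:ℝ)+1) := by
        rw [eq_div_iff (by positivity)]; linarith
      have ihm : ((m : ℝ) / l) ^ l ≤ (m.choose l : ℝ) := ih m hl hlm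
      have hlposR : (0:ℝ) < l := by exact_mod_cast hl
      have hml : (((m:ℝ)+1) / ((l:ℝ)+1)) ≤ (m : ℝ) / l := by
        rw [div_le_div_iff₀ (by positivity) hlposR]
        have : (l : ℝ) + 1 ≤ m + 1 := by exact_mod_cast Nat.add_le_add_right hlm 1
        nlinarith
      have hpos : (0:ℝ) ≤ ((m:ℝ)+1) / ((l:ℝ)+1) := by positivity
      push_cast
      calc (((m:ℝ)+1) / ((l:ℝ)+1)) ^ (l+1)
          = (((m:ℝ)+1) / ((l:ℝ)+1)) * (((m:ℝ)+1) / ((l:ℝ)+1)) ^ l := by ring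
        _ ≤ (((m:ℝ)+1) / ((l:ℝ)+1)) * ((m : ℝ) / l) ^ l := by gcongr
        _ ≤ (((m:ℝ)+1) / ((l:ℝ)+1)) * (m.choose l : ℝ) := by gcongr
        _ = ((m+1).choose (l+1) : ℝ) := by rw [hchoose]; ring

/-- For all integers `1 ≤ l ≤ n`,
`C(n,l) ≤ inf_{r>0} r^{-l} (∑_{k=0}^n C(n,k)² r^{2k})^{1/2} ≤ e^l C(n,l)`. -/
theorem stmt1 (n l : ℕ) (hl : 1 ≤ l) (hln : l ≤ n) :
    (n.choose l : ℝ) ≤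
      sInf {x : ℝ | ∃ r : ℝ, 0 < r ∧
        x = r ^ (-(l : ℝ)) * Real.sqrt (∑ k ∈ Finset.range (n + 1),
              (n.choose k : ℝ) ^ 2 * r ^ (2 * k))} ∧
    sInf {x : ℝ | ∃ r : ℝ, 0 < r ∧
        x = r ^ (-(l : ℝ)) * Real.sqrt (∑ k ∈ Finset.range (n + 1),
              (n.choose k : ℝ) ^ 2 * r ^ (2 * k))} ≤
      Real.exp l * (n.choose l : ℝ) := by
  set S := {x : ℝ | ∃ r : ℝ, 0 < r ∧
        x = r ^ (-(l : ℝ)) * Real.sqrt (∑ k ∈ Finset.range (n + 1),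
              (n.choose k : ℝ) ^ 2 * r ^ (2 * k))} with hS
  have hC1 : (1:ℝ) ≤ (n.choose l : ℝ) := by exact_mod_cast Nat.choose_pos hln
  -- Lower bound: C(n,l) is a lower bound of S
  have hlb : ∀ x ∈ S, (n.choose l : ℝ) ≤ x := by
    rintro x ⟨r, hr, rfl⟩
    have hterm : ((n.choose l : ℝ)) ^ 2 * r ^ (2 * l) ≤
        ∑ k ∈ Finset.range (n + 1), (n.choose k : ℝ) ^ 2 * r ^ (2 * k) :=
      Finset.single_le_sum (f := fun k => (n.choose k : ℝ) ^ 2 * r ^ (2 * k))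
        (fun k _ => by positivity) (Finset.mem_range.mpr (by omega))
    have hsq : ((n.choose l : ℝ) * r ^ l) ≤ Real.sqrt (∑ k ∈ Finset.range (n + 1),
        (n.choose k : ℝ) ^ 2 * r ^ (2 * k)) := by
      rw [show (2 * l) = l * 2 by ring] at hterm
      have := Real.sqrt_le_sqrt hterm
      rwa [pow_mul, ← mul_pow, Real.sqrt_sq (by positivity)] at this
    have hrpow : r ^ (-(l : ℝ)) = (r ^ l)⁻¹ := by
      rw [Real.rpow_neg hr.le, Real.rpow_natCast]
    rw [hrpow, inv_mul_eq_div, le_div_iff₀ (by positivity)]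
    exact hsq
  constructor
  · exact le_csInf ⟨_, 1, one_pos, rfl⟩ hlb
  · -- Upper bound via r₀ = C^{-1/l}
    set C : ℝ := (n.choose l : ℝ) with hCdef
    have hCpos : (0:ℝ) < C := lt_of_lt_of_le one_pos hC1
    set r₀ : ℝ := C ^ (-(1 / l : ℝ)) with hr₀
    have hr₀pos : 0 < r₀ := Real.rpow_pos_of_pos hCpos _
    have hlpos : (0:ℝ) < l := by exact_mod_cast hl
    have hnpos : (0:ℝ) < n := by exact_mod_cast lt_of_lt_of_le hl hln
    have hr₀pow : r₀ ^ (-(l : ℝ)) = C := by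
      have h1 : (-(1/(l:ℝ))) * (-(l:ℝ)) = 1 := by field_simp
      rw [hr₀, ← Real.rpow_mul hCpos.le, h1, Real.rpow_one]
    -- r₀ ≤ l / n
    have hr₀le : r₀ ≤ (l : ℝ) / n := by
      have hCn : ((n:ℝ)/l) ^ l ≤ C := pow_div_le_choose l n hl hln
      have h1 : ((n:ℝ)/l) ≤ C ^ ((1:ℝ)/l) := by
        rw [← Real.rpow_natCast ((n:ℝ)/l) l] at hCn
        have := Real.rpow_le_rpow (by positivity) hCn (by positivity : (0:ℝ) ≤ 1/l)
        rwa [← Real.rpow_mul (by positivity), mul_one_div, div_self hlpos.ne',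
          Real.rpow_one] at this
      have heq : r₀ = (C ^ ((1:ℝ)/l))⁻¹ := by
        rw [hr₀, Real.rpow_neg hCpos.le]
      rw [heq, inv_le_comm₀ (Real.rpow_pos_of_pos hCpos _) (by positivity)]
      calc ((l:ℝ)/n)⁻¹ = (n:ℝ)/l := by field_simp
        _ ≤ _ := h1
    -- the sum bound
    have hsum : (∑ k ∈ Finset.range (n + 1), (n.choose k : ℝ) ^ 2 * r₀ ^ (2 * k))
        ≤ ((1 + r₀) ^ n) ^ 2 := by
      have h1 : ∀ k ∈ Finset.range (n+1), (n.choose k : ℝ) ^ 2 * r₀ ^ (2 * k)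
          = ((n.choose k : ℝ) * r₀ ^ k) ^ 2 := by
        intro k _; rw [mul_pow, ← pow_mul, mul_comm k 2]
      rw [Finset.sum_congr rfl h1]
      have h2 := Finset.sum_sq_le_sq_sum_of_nonneg
        (s := Finset.range (n+1)) (f := fun k => (n.choose k : ℝ) * r₀ ^ k)
        (fun i _ => by positivity)
      refine h2.trans_eq ?_
      congr 1
      rw [add_comm (1:ℝ) r₀, add_pow]
      refine Finset.sum_congr rfl fun k _ => by ring
    have hsqrt : Real.sqrt (∑ k ∈ Finset.range (n + 1),
        (n.choose k : ℝ) ^ 2 * r₀ ^ (2 * k)) ≤ (1 + r₀) ^ n := by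
      have := Real.sqrt_le_sqrt hsum
      rwa [Real.sqrt_sq (by positivity)] at this
    have hexp : (1 + r₀) ^ n ≤ Real.exp l := by
      calc (1 + r₀) ^ n ≤ (1 + (l:ℝ)/n) ^ n := by gcongr
        _ ≤ (Real.exp ((l:ℝ)/n)) ^ n := by
            apply pow_le_pow_left₀ (by positivity)
            linarith [Real.add_one_le_exp ((l:ℝ)/n)]
        _ = Real.exp l := by
            rw [← Real.exp_nat_mul]
            congr 1
            field_simp
    have hmem : r₀ ^ (-(l : ℝ)) * Real.sqrt (∑ k ∈ Finset.range (n + 1),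
        (n.choose k : ℝ) ^ 2 * r₀ ^ (2 * k)) ∈ S := ⟨r₀, hr₀pos, rfl⟩
    have hbdd : BddBelow S := ⟨C, hlb⟩
    refine (csInf_le hbdd hmem).trans ?_
    rw [hr₀pow]
    calc C * Real.sqrt (∑ k ∈ Finset.range (n + 1),
          (n.choose k : ℝ) ^ 2 * r₀ ^ (2 * k))
        ≤ C * Real.exp l := by
          gcongr
          exact hsqrt.trans hexp
      _ = Real.exp l * C := mul_comm _ _
end

section
/- Let q be a norm on the space of complex polynomials of one variable such that q(P') ≤ M (deg P)^m q(P) for all polynomials P, where M > 0 and m ≥ 1. Then for every n ≥ 1 and r ≥ 0, v_n(q,r) := (1/n) log sup{ sup_{|ζ|≤r} q(P(·+ζ)) : deg P ≤ n, q(P) ≤ 1 } satisfies v_n(q,r) ≤ M n^{m-1} r. -/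
/-!
On polynomials of degree at most `n` the Markov inequality reads `q(P') ≤ K q(P)` with
`K = M n^m`, so `q(P^{(k)}) ≤ K^k q(P)`. Inserting this into the Taylor expansion
`P(x + ζ) = ∑ ζ^k P^{(k)}(x) / k!` bounds `q(P(· + ζ))` by the exponential series of `K |ζ|`,
i.e. by `exp(K |ζ|) q(P)`; taking logarithms and dividing by `n` gives `M n^{m-1} r`.
-/

open Polynomial Real

namespace Polynomial

theorem comp_X_add_C_eq_sum_hasseDeriv {R : Type*} [CommSemiring R] (P : R[X]) (ζ : R) :
    P.comp (X + C ζ) = ∑ k ∈ Finset.range (P.natDegree + 1), ζ ^ k • hasseDeriv k P := by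
  rw [← taylor_apply]
  ext j
  rw [taylor_coeff, finsetSum_coeff, eval_eq_sum_range' (n := P.natDegree + 1)
    (Nat.lt_succ_of_le ((natDegree_hasseDeriv_le P j).trans (Nat.sub_le _ _)))]
  refine Finset.sum_congr rfl fun k _ => ?_
  rw [coeff_smul, hasseDeriv_coeff, hasseDeriv_coeff, add_comm j k, Nat.choose_symm_add,
    smul_eq_mul]
  ring

end Polynomial

namespace Seminorm

open scoped Nat

variable {𝕜 : Type*} [RCLike 𝕜] (p : Seminorm 𝕜 𝕜[X]) {n : ℕ} {K : ℝ}

theorem iterate_derivative_le (hK : 0 ≤ K)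
    (hD : ∀ P : 𝕜[X], P.natDegree ≤ n → p (derivative P) ≤ K * p P)
    {P : 𝕜[X]} (hP : P.natDegree ≤ n) (k : ℕ) :
    p (derivative^[k] P) ≤ K ^ k * p P := by
  induction k with
  | zero => simp
  | succ k ih =>
    have hdeg : (derivative^[k] P).natDegree ≤ n :=
      (natDegree_iterate_derivative P k).trans ((Nat.sub_le _ _).trans hP)
    rw [Function.iterate_succ_apply', pow_succ', mul_assoc]
    exact (hD _ hdeg).trans (mul_le_mul_of_nonneg_left ih hK)

theorem hasseDeriv_le (hK : 0 ≤ K)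
    (hD : ∀ P : 𝕜[X], P.natDegree ≤ n → p (derivative P) ≤ K * p P)
    {P : 𝕜[X]} (hP : P.natDegree ≤ n) (k : ℕ) :
    p (hasseDeriv k P) ≤ K ^ k / k ! * p P := by
  have hfac : (k ! : ℝ) * p (hasseDeriv k P) = p (derivative^[k] P) := by
    rw [← RCLike.norm_natCast (K := 𝕜), ← map_smul_eq_mul, Nat.cast_smul_eq_nsmul,
      ← factorial_smul_hasseDeriv]
    rfl
  rw [div_mul_eq_mul_div, le_div_iff₀ (by positivity), mul_comm, hfac]
  exact p.iterate_derivative_le hK hD hP k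

theorem comp_X_add_C_le (hK : 0 ≤ K)
    (hD : ∀ P : 𝕜[X], P.natDegree ≤ n → p (derivative P) ≤ K * p P)
    {P : 𝕜[X]} (hP : P.natDegree ≤ n) (ζ : 𝕜) :
    p (P.comp (X + C ζ)) ≤ exp (K * ‖ζ‖) * p P := by
  rw [comp_X_add_C_eq_sum_hasseDeriv]
  calc p (∑ k ∈ Finset.range (P.natDegree + 1), ζ ^ k • hasseDeriv k P)
      ≤ ∑ k ∈ Finset.range (P.natDegree + 1), p (ζ ^ k • hasseDeriv k P) :=
        Finset.le_sum_of_subadditive p (map_zero p).le (map_add_le_add p) _ _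
    _ ≤ ∑ k ∈ Finset.range (P.natDegree + 1), (K * ‖ζ‖) ^ k / k ! * p P := by
        refine Finset.sum_le_sum fun k _ => ?_
        rw [map_smul_eq_mul, norm_pow]
        calc ‖ζ‖ ^ k * p (hasseDeriv k P) ≤ ‖ζ‖ ^ k * (K ^ k / k ! * p P) :=
              mul_le_mul_of_nonneg_left (p.hasseDeriv_le hK hD hP k) (by positivity)
          _ = (K * ‖ζ‖) ^ k / k ! * p P := by ring
    _ ≤ exp (K * ‖ζ‖) * p P := by
        rw [← Finset.sum_mul]
        exact mul_le_mul_of_nonneg_right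
          (sum_le_exp_of_nonneg (by positivity) _) (apply_nonneg p P)

end Seminorm

theorem Real.log_sSup_le {S : Set ℝ} {A : ℝ} (hA : 0 ≤ A) (h_nonneg : ∀ x ∈ S, 0 ≤ x)
    (h_le : ∀ x ∈ S, x ≤ exp A) : log (sSup S) ≤ A := by
  rcases (Real.sSup_nonneg h_nonneg).eq_or_lt with h | h
  · rw [← h, log_zero]
    exact hA
  · exact (log_le_iff_le_exp h).2 (Real.sSup_le h_le (exp_pos A).le)

theorem stmt2_general (q : Polynomial ℂ → ℝ)
    (hq_add : ∀ P Q, q (P + Q) ≤ q P + q Q)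
    (hq_smul : ∀ (c : ℂ) P, q (c • P) = ‖c‖ * q P)
    (M m : ℝ) (hM : 0 < M) (hm : 1 ≤ m)
    (hMarkov : ∀ P : Polynomial ℂ, q (Polynomial.derivative P) ≤
      M * (P.natDegree : ℝ) ^ m * q P)
    (n : ℕ) (hn : 1 ≤ n) (r : ℝ) (hr : 0 ≤ r) :
    (1 / (n : ℝ)) * Real.log (sSup {x : ℝ | ∃ (P : Polynomial ℂ) (ζ : ℂ),
        P.natDegree ≤ n ∧ q P ≤ 1 ∧ ‖ζ‖ ≤ r ∧
        x = q (P.comp (Polynomial.X + Polynomial.C ζ))})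
      ≤ M * (n : ℝ) ^ (m - 1) * r := by
  let p : Seminorm ℂ ℂ[X] := Seminorm.of q hq_add hq_smul
  set K := M * (n : ℝ) ^ m
  have hK : 0 ≤ K := by positivity
  have hD : ∀ P : ℂ[X], P.natDegree ≤ n → p (derivative P) ≤ K * p P := fun P hP =>
    (hMarkov P).trans <| mul_le_mul_of_nonneg_right (mul_le_mul_of_nonneg_left
      (rpow_le_rpow (Nat.cast_nonneg _) (by exact_mod_cast hP) (by linarith)) hM.le)
      (apply_nonneg p P)
  calc 1 / (n : ℝ) * log _ ≤ 1 / n * (K * r) := by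
        gcongr
        refine Real.log_sSup_le (by positivity) ?_ ?_
        · rintro _ ⟨P, ζ, -, -, -, rfl⟩
          exact apply_nonneg p _
        · rintro _ ⟨P, ζ, hP, hq, hζ, rfl⟩
          calc p (P.comp (X + C ζ)) ≤ exp (K * ‖ζ‖) * p P := p.comp_X_add_C_le hK hD hP ζ
            _ ≤ exp (K * r) * 1 := by gcongr; exact hq
            _ = exp (K * r) := mul_one _
    _ = M * (n : ℝ) ^ (m - 1) * r := by
      rw [rpow_sub_one (by positivity)]
      field_simp
      ring

/-- if a norm `q` on complex polynomials satisfies the A. Markov type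
inequality `q(P') ≤ M (deg P)^m q(P)`, then
`v_n(q,r) := (1/n) log sup{ q(P(·+ζ)) : |ζ| ≤ r, deg P ≤ n, q(P) ≤ 1 }`
satisfies `v_n(q,r) ≤ M n^{m-1} r`. -/
theorem stmt2 (q : Polynomial ℂ → ℝ)
    (hq_add : ∀ P Q, q (P + Q) ≤ q P + q Q)
    (hq_smul : ∀ (c : ℂ) P, q (c • P) = ‖c‖ * q P)
    (hq_eq : ∀ P, q P = 0 ↔ P = 0)
    (M m : ℝ) (hM : 0 < M) (hm : 1 ≤ m)
    (hMarkov : ∀ P : Polynomial ℂ, q (Polynomial.derivative P) ≤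
      M * (P.natDegree : ℝ) ^ m * q P)
    (n : ℕ) (hn : 1 ≤ n) (r : ℝ) (hr : 0 ≤ r) :
    (1 / (n : ℝ)) * Real.log (sSup {x : ℝ | ∃ (P : Polynomial ℂ) (ζ : ℂ),
        P.natDegree ≤ n ∧ q P ≤ 1 ∧ ‖ζ‖ ≤ r ∧
        x = q (P.comp (Polynomial.X + Polynomial.C ζ))})
      ≤ M * (n : ℝ) ^ (m - 1) * r :=
  stmt2_general q hq_add hq_smul M m hM hm hMarkov n hn r hr
end

section
/- Let q be a norm on complex polynomials of one variable satisfying the V. Markov type inequality q(P^{(k)}) ≤ M^k (1/k!)^{m-1} (deg P)^{km} q(P) for all P and all k ≥ 1, with constants M > 0, m ≥ 1. Then for every n ≥ 1 and every r ≥ 0, sup{ sup_{|ζ|≤r} q(P(·+ζ)) : deg P ≤ n, q(P) ≤ 1 } ≤ exp(m M^{1/m} n r^{1/m}); equivalently v_n(q,r) ≤ m M^{1/m} r^{1/m}. -/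
open Polynomial Real Nat

/-! Taylor's formula gives `P(· + ζ) = ∑ₖ ζᵏ Pᵏ/k!`, and the Markov inequality bounds its `k`-th
term by `rᵏ Mᵏ n^{km} / (k!)ᵐ = (yᵏ/k!)ᵐ` with `y = (M r)^{1/m} n`. Since `m ≥ 1`, a sum of `m`-th powers
is at most the `m`-th power of the sum, and `∑ₖ yᵏ/k! ≤ eʸ`; hence `q(P(· + ζ)) ≤ e^{m y}`. -/

open Finset in
theorem Polynomial.comp_X_add_C_eq_sum_hasseDeriv_s3 {R : Type*} [CommSemiring R] (f : R[X]) (ζ : R)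
    {N : ℕ} (hN : f.natDegree < N) :
    f.comp (X + C ζ) = ∑ k ∈ range N, ζ ^ k • hasseDeriv k f := by
  ext i
  rw [← taylor_apply, taylor_coeff, finsetSum_coeff,
    eval_eq_sum_range' (((natDegree_hasseDeriv_le f i).trans (Nat.sub_le _ _)).trans_lt hN)]
  refine sum_congr rfl fun k _ => ?_
  rw [coeff_smul, hasseDeriv_coeff, hasseDeriv_coeff, smul_eq_mul, add_comm k i,
    choose_symm_add]
  ring

theorem Seminorm.factorial_mul_hasseDeriv {𝕜 : Type*} [RCLike 𝕜] (p : Seminorm 𝕜 𝕜[X]) (k : ℕ)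
    (f : 𝕜[X]) : (k ! : ℝ) * p (hasseDeriv k f) = p (derivative^[k] f) := by
  rw [← factorial_smul_hasseDeriv, LinearMap.smul_apply, ← Nat.cast_smul_eq_nsmul 𝕜,
    map_smul_eq_mul, RCLike.norm_natCast]

theorem Finset.sum_rpow_le_rpow_sum {ι : Type*} (s : Finset ι) {f : ι → ℝ}
    (hf : ∀ i ∈ s, 0 ≤ f i) {p : ℝ} (hp : 1 ≤ p) :
    ∑ i ∈ s, f i ^ p ≤ (∑ i ∈ s, f i) ^ p := by
  induction s using Finset.cons_induction with
  | empty => simp [zero_rpow (by positivity : p ≠ 0)]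
  | cons i s _ ih =>
    rw [sum_cons, sum_cons]
    have hs := fun j hj => hf j (mem_cons_of_mem hj)
    calc f i ^ p + ∑ j ∈ s, f j ^ p ≤ f i ^ p + (∑ j ∈ s, f j) ^ p := by gcongr; exact ih hs
      _ ≤ _ := add_rpow_le_rpow_add (hf i (mem_cons_self i s)) (sum_nonneg hs) hp

theorem markov_taylor_term_eq {M r m n : ℝ} (hM : 0 ≤ M) (hr : 0 ≤ r) (hn : 0 ≤ n) (hm : 0 < m)
    (k : ℕ) :
    r ^ k * (M ^ k * (1 / (k ! : ℝ)) ^ (m - 1) * n ^ ((k : ℝ) * m)) / k ! =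
      (((M * r) ^ (1 / m) * n) ^ k / k !) ^ m := by
  set y := (M * r) ^ (1 / m) * n
  have hy : 0 ≤ y := by positivity
  have hym : y ^ m = M * r * n ^ m := by
    rw [mul_rpow (by positivity) hn, ← rpow_mul (by positivity), one_div_mul_cancel hm.ne',
      rpow_one]
  have hfac : (1 / (k ! : ℝ)) ^ (m - 1) / k ! = (1 / (k ! : ℝ)) ^ m := by
    rw [div_eq_mul_one_div _ (k ! : ℝ), ← rpow_add_one (by positivity), sub_add_cancel]
  rw [div_eq_mul_one_div (y ^ k), mul_rpow (by positivity) (by positivity), ← rpow_natCast y k,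
    ← rpow_mul hy, mul_comm (k : ℝ) m, rpow_mul hy, hym, rpow_natCast, rpow_mul hn,
    rpow_natCast (n ^ m), ← hfac]
  ring

def Seminorm.VMarkovInequality {𝕜 : Type*} [RCLike 𝕜] (p : Seminorm 𝕜 𝕜[X]) (M m : ℝ) : Prop :=
  ∀ (P : 𝕜[X]) (k : ℕ), 1 ≤ k →
    p (derivative^[k] P) ≤
      M ^ k * (1 / (k ! : ℝ)) ^ (m - 1) * (P.natDegree : ℝ) ^ ((k : ℝ) * m) * p P

namespace Seminorm.VMarkovInequality

variable {𝕜 : Type*} [RCLike 𝕜] {p : Seminorm 𝕜 𝕜[X]} {M m r : ℝ} {P : 𝕜[X]} {n : ℕ} {ζ : 𝕜}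

theorem smul_hasseDeriv_le (hV : p.VMarkovInequality M m) (hM : 0 ≤ M) (hm : 0 < m)
    (hr : 0 ≤ r) (hP : P.natDegree ≤ n) (hP1 : p P ≤ 1) (hζ : ‖ζ‖ ≤ r) (k : ℕ) :
    p (ζ ^ k • hasseDeriv k P) ≤ (((M * r) ^ (1 / m) * n) ^ k / k !) ^ m := by
  rcases k.eq_zero_or_pos with rfl | hk
  · simpa using hP1
  have hk! : (0 : ℝ) < k ! := by positivity
  have hderiv : p (derivative^[k] P) ≤ M ^ k * (1 / (k ! : ℝ)) ^ (m - 1) * (n : ℝ) ^ ((k : ℝ) * m) :=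
    calc p (derivative^[k] P)
        ≤ M ^ k * (1 / (k ! : ℝ)) ^ (m - 1) * (P.natDegree : ℝ) ^ ((k : ℝ) * m) * p P :=
          hV P k hk
      _ ≤ M ^ k * (1 / (k ! : ℝ)) ^ (m - 1) * (n : ℝ) ^ ((k : ℝ) * m) * 1 := by gcongr
      _ = _ := mul_one _
  calc p (ζ ^ k • hasseDeriv k P) = ‖ζ‖ ^ k * p (derivative^[k] P) / k ! := by
        rw [map_smul_eq_mul, norm_pow, ← factorial_mul_hasseDeriv, mul_div_assoc,
          mul_div_cancel_left₀ _ hk!.ne']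
    _ ≤ r ^ k * (M ^ k * (1 / (k ! : ℝ)) ^ (m - 1) * (n : ℝ) ^ ((k : ℝ) * m)) / k ! := by gcongr
    _ = _ := markov_taylor_term_eq hM hr n.cast_nonneg hm k

theorem comp_X_add_C_le (hV : p.VMarkovInequality M m) (hM : 0 ≤ M) (hm : 1 ≤ m)
    (hr : 0 ≤ r) (hP : P.natDegree ≤ n) (hP1 : p P ≤ 1) (hζ : ‖ζ‖ ≤ r) :
    p (P.comp (X + C ζ)) ≤ exp (m * ((M * r) ^ (1 / m) * n)) := by
  set y := (M * r) ^ (1 / m) * n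
  have hy : 0 ≤ y := by positivity
  have hm0 : 0 < m := by linarith
  calc p (P.comp (X + C ζ)) = p (∑ k ∈ Finset.range (n + 1), ζ ^ k • hasseDeriv k P) := by
        rw [P.comp_X_add_C_eq_sum_hasseDeriv_s3 ζ (Nat.lt_succ_of_le hP)]
    _ ≤ ∑ k ∈ Finset.range (n + 1), p (ζ ^ k • hasseDeriv k P) :=
        Finset.le_sum_of_subadditive p (map_zero p).le (map_add_le_add p) _ _
    _ ≤ ∑ k ∈ Finset.range (n + 1), (y ^ k / k !) ^ m :=
        Finset.sum_le_sum fun k _ => hV.smul_hasseDeriv_le hM hm0 hr hP hP1 hζ k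
    _ ≤ (∑ k ∈ Finset.range (n + 1), y ^ k / k !) ^ m :=
        Finset.sum_rpow_le_rpow_sum _ (fun k _ => by positivity) hm
    _ ≤ exp y ^ m := by gcongr; exact sum_le_exp_of_nonneg hy _
    _ = exp (m * y) := by rw [← exp_mul, mul_comm]

end Seminorm.VMarkovInequality

theorem stmt3_general (q : Polynomial ℂ → ℝ)
    (hq_add : ∀ P Q, q (P + Q) ≤ q P + q Q)
    (hq_smul : ∀ (c : ℂ) P, q (c • P) = ‖c‖ * q P)
    (M m : ℝ) (hM : 0 < M) (hm : 1 ≤ m)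
    (hVMarkov : ∀ (P : Polynomial ℂ) (k : ℕ), 1 ≤ k →
      q ((Polynomial.derivative)^[k] P) ≤
        M ^ k * ((1 : ℝ) / (Nat.factorial k : ℝ)) ^ (m - 1) *
          ((P.natDegree : ℝ)) ^ ((k : ℝ) * m) * q P)
    (n : ℕ) (r : ℝ) (hr : 0 ≤ r) :
    sSup {x : ℝ | ∃ (P : Polynomial ℂ) (ζ : ℂ),
        P.natDegree ≤ n ∧ q P ≤ 1 ∧ ‖ζ‖ ≤ r ∧
        x = q (P.comp (Polynomial.X + Polynomial.C ζ))}
      ≤ Real.exp (m * M ^ ((1 : ℝ) / m) * (n : ℝ) * r ^ ((1 : ℝ) / m)) := by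
  let p : Seminorm ℂ ℂ[X] := Seminorm.of q hq_add hq_smul
  have hV : p.VMarkovInequality M m := hVMarkov
  refine Real.sSup_le ?_ (exp_nonneg _)
  rintro _ ⟨P, ζ, hP, hP1, hζ, rfl⟩
  have hexponent : m * ((M * r) ^ (1 / m) * n) = m * M ^ (1 / m) * n * r ^ (1 / m) := by
    rw [mul_rpow hM.le hr]
    ring
  exact hexponent ▸ hV.comp_X_add_C_le hM.le hm hr hP hP1 hζ

/-- if a norm `q` on complex polynomials satisfies the V. Markov type
inequality `q(P^{(k)}) ≤ M^k (1/k!)^{m-1} (deg P)^{km} q(P)` for all `k ≥ 1`, then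
`sup{ q(P(·+ζ)) : |ζ| ≤ r, deg P ≤ n, q(P) ≤ 1 } ≤ exp(m M^{1/m} n r^{1/m})`. -/
theorem stmt3 (q : Polynomial ℂ → ℝ)
    (hq_add : ∀ P Q, q (P + Q) ≤ q P + q Q)
    (hq_smul : ∀ (c : ℂ) P, q (c • P) = ‖c‖ * q P)
    (hq_eq : ∀ P, q P = 0 ↔ P = 0)
    (M m : ℝ) (hM : 0 < M) (hm : 1 ≤ m)
    (hVMarkov : ∀ (P : Polynomial ℂ) (k : ℕ), 1 ≤ k →
      q ((Polynomial.derivative)^[k] P) ≤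
        M ^ k * ((1 : ℝ) / (Nat.factorial k : ℝ)) ^ (m - 1) *
          ((P.natDegree : ℝ)) ^ ((k : ℝ) * m) * q P)
    (n : ℕ) (hn : 1 ≤ n) (r : ℝ) (hr : 0 ≤ r) :
    sSup {x : ℝ | ∃ (P : Polynomial ℂ) (ζ : ℂ),
        P.natDegree ≤ n ∧ q P ≤ 1 ∧ ‖ζ‖ ≤ r ∧
        x = q (P.comp (Polynomial.X + Polynomial.C ζ))}
      ≤ Real.exp (m * M ^ ((1 : ℝ) / m) * (n : ℝ) * r ^ ((1 : ℝ) / m)) :=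
  stmt3_general q hq_add hq_smul M m hM hm hVMarkov n r hr
end

section
/- Let E ⊂ ℂ be a Bernstein set, i.e. M(E,1) := sup{ ‖P'‖_E / deg P : deg P ≥ 1, ‖P‖_E = 1 } < ∞, and let M₁(E) := sup{ ‖P'‖_E : deg P ≤ 1, ‖P‖_E = 1 }. Then for all n ≥ 1 and r ≥ 0, (1 + M₁(E) r)^n ≤ φ_n(E,r) ≤ (1 + M(E,1) r)^n. -/
/-!
Upper bound: Bernstein's inequality `‖P'‖_E ≤ M · deg P · ‖P‖_E` applies to every polynomial,
and the Hasse derivatives satisfy `(H_k P)' = (k + 1) H_{k+1} P`, so induction gives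
`‖H_k P‖_E ≤ C(d, k) M^k ‖P‖_E`. Summing the Taylor expansion `P(z + ζ) = ∑ H_k P(z) ζ^k` yields
`|P(z + ζ)| ≤ (1 + M|ζ|)^d ‖P‖_E`.

Lower bound: an affine `P` with `‖P‖_E = 1` attains its norm at some `z ∈ E`, and one step of
length `r` from `z` multiplies `P(z)` by `1 + r‖P'‖`; `P^n` then shows
`(1 + ‖P'‖_E r)^n ≤ φ_n(E, r)`, and this passes to the supremum `M₁(E)` since it is a closed
condition.
-/

open Polynomial

/-- Sup norm of a polynomial on a set `E ⊂ ℂ`. -/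
noncomputable def supNorm (E : Set ℂ) (P : Polynomial ℂ) : ℝ :=
  sSup {x : ℝ | ∃ z ∈ E, x = ‖P.eval z‖}

/-- `φ_n(E,r) = sup{ |P(z+ζ)| : z ∈ E, |ζ| ≤ r, deg P ≤ n, ‖P‖_E ≤ 1 }`. -/
noncomputable def phi (E : Set ℂ) (n : ℕ) (r : ℝ) : ℝ :=
  sSup {x : ℝ | ∃ (P : Polynomial ℂ) (z ζ : ℂ), z ∈ E ∧ ‖ζ‖ ≤ r ∧
    P.natDegree ≤ n ∧ supNorm E P ≤ 1 ∧ x = ‖P.eval (z + ζ)‖}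

def phiValues (E : Set ℂ) (n : ℕ) (r : ℝ) : Set ℝ :=
  {x : ℝ | ∃ (P : Polynomial ℂ) (z ζ : ℂ), z ∈ E ∧ ‖ζ‖ ≤ r ∧
    P.natDegree ≤ n ∧ supNorm E P ≤ 1 ∧ x = ‖P.eval (z + ζ)‖}

lemma phi_eq_sSup_phiValues (E : Set ℂ) (n : ℕ) (r : ℝ) : phi E n r = sSup (phiValues E n r) :=
  rfl

section SupNorm

variable {E : Set ℂ}

lemma supNorm_eq_sSup_image (E : Set ℂ) (P : ℂ[X]) :
    supNorm E P = sSup ((fun z => ‖P.eval z‖) '' E) := by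
  simp only [_root_.supNorm, Set.image, eq_comm]

lemma zero_le_supNorm (E : Set ℂ) (P : ℂ[X]) : 0 ≤ supNorm E P :=
  Real.sSup_nonneg (by rintro _ ⟨z, -, rfl⟩; positivity)

lemma norm_eval_le_supNorm (hE : IsCompact E) (P : ℂ[X]) {z : ℂ} (hz : z ∈ E) :
    ‖P.eval z‖ ≤ supNorm E P := by
  rw [supNorm_eq_sSup_image]
  exact le_csSup (hE.bddAbove_image (by fun_prop)) ⟨z, hz, rfl⟩

lemma exists_norm_eval_eq_supNorm (hE : IsCompact E) (hEne : E.Nonempty) (P : ℂ[X]) :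
    ∃ z ∈ E, ‖P.eval z‖ = supNorm E P := by
  rw [supNorm_eq_sSup_image]
  exact (hE.image (by fun_prop)).sSup_mem (hEne.image _)

lemma supNorm_congr {P Q : ℂ[X]} (h : ∀ z ∈ E, P.eval z = Q.eval z) :
    supNorm E P = supNorm E Q := by
  simp only [supNorm_eq_sSup_image, Set.image_congr fun z hz => congrArg norm (h z hz)]

lemma supNorm_smul (E : Set ℂ) (c : ℂ) (P : ℂ[X]) :
    supNorm E (c • P) = ‖c‖ * supNorm E P := by
  rw [supNorm_eq_sSup_image, supNorm_eq_sSup_image, ← smul_eq_mul,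
    ← Real.sSup_smul_of_nonneg (norm_nonneg c), ← Set.image_smul, Set.image_image]
  simp only [eval_smul, smul_eq_mul, norm_mul]

lemma supNorm_C_of_nonempty (hEne : E.Nonempty) (a : ℂ) : supNorm E (C a) = ‖a‖ := by
  simp [supNorm_eq_sSup_image, hEne.image_const]

lemma supNorm_pow_le (hE : IsCompact E) (P : ℂ[X]) (k : ℕ) :
    supNorm E (P ^ k) ≤ supNorm E P ^ k := by
  refine Real.sSup_le ?_ (by positivity [zero_le_supNorm E P])
  rintro _ ⟨z, hz, rfl⟩
  rw [eval_pow, norm_pow]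
  exact pow_le_pow_left₀ (norm_nonneg _) (norm_eval_le_supNorm hE P hz) k

lemma supNorm_inv_smul_self {P : ℂ[X]} (hP : supNorm E P ≠ 0) :
    supNorm E ((supNorm E P : ℂ)⁻¹ • P) = 1 := by
  rw [supNorm_smul, norm_inv, Complex.norm_of_nonneg (zero_le_supNorm E P), inv_mul_cancel₀ hP]

lemma exists_natDegree_eq_one_supNorm_eq_one (hE : IsCompact E) (hEne : E.Nonempty) :
    ∃ P : ℂ[X], P.natDegree = 1 ∧ supNorm E P = 1 := by
  obtain ⟨a, ha⟩ := (Set.ne_univ_iff_exists_notMem E).mp hE.ne_univ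
  obtain ⟨z, hz⟩ := hEne
  have hpos : 0 < supNorm E (X - C a) := by
    refine lt_of_lt_of_le ?_ (norm_eval_le_supNorm hE _ hz)
    simpa [sub_eq_zero] using ne_of_mem_of_not_mem hz ha
  refine ⟨_, ?_, supNorm_inv_smul_self hpos.ne'⟩
  rw [natDegree_smul _ (by exact_mod_cast inv_ne_zero hpos.ne'), natDegree_X_sub_C]

end SupNorm

lemma derivative_hasseDeriv {R : Type*} [Semiring R] (k : ℕ) (P : R[X]) :
    derivative (hasseDeriv k P) = (k + 1) • hasseDeriv (k + 1) P := by
  have h := congrArg (fun f => f P) (hasseDeriv_comp (R := R) 1 k)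
  simpa only [hasseDeriv_one, LinearMap.comp_apply, Nat.choose_one_right, LinearMap.smul_apply,
    add_comm 1 k] using h

section Bernstein

variable {E : Set ℂ} {M : ℝ}
  (hM : ∀ P : ℂ[X], 1 ≤ P.natDegree → supNorm E P = 1 →
    supNorm E (derivative P) / P.natDegree ≤ M)
include hM

lemma supNorm_derivative_le_of_pos {P : ℂ[X]} (hP : 0 < supNorm E P) :
    supNorm E (derivative P) ≤ M * P.natDegree * supNorm E P := by
  set s := supNorm E P
  have hs : (s : ℂ)⁻¹ ≠ 0 := by exact_mod_cast inv_ne_zero hP.ne'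
  rcases Nat.eq_zero_or_pos P.natDegree with hd | hd
  · simpa [derivative_of_natDegree_zero hd, hd] using (supNorm_smul E 0 0).le
  have hQ := hM ((s : ℂ)⁻¹ • P) (by rwa [natDegree_smul _ hs]) (supNorm_inv_smul_self hP.ne')
  rw [derivative_smul, supNorm_smul, natDegree_smul _ hs, norm_inv,
    Complex.norm_of_nonneg hP.le, div_le_iff₀ (by exact_mod_cast hd), inv_mul_le_iff₀ hP] at hQ
  linarith

/-- Where `P` vanishes on `E`, compare with `P + t`, whose sup norm is `t`, and let `t → 0`. -/
lemma supNorm_derivative_le (hE : IsCompact E) (hEne : E.Nonempty) (P : ℂ[X]) :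
    supNorm E (derivative P) ≤ M * P.natDegree * supNorm E P := by
  obtain hpos | h0 := (zero_le_supNorm E P).lt_or_eq
  · exact supNorm_derivative_le_of_pos hM hpos
  have hvanish : ∀ z ∈ E, P.eval z = 0 := fun z hz =>
    norm_le_zero_iff.mp (h0 ▸ norm_eval_le_supNorm hE P hz)
  have hshift : ∀ t : ℝ, 0 < t → supNorm E (derivative P) ≤ M * P.natDegree * t := by
    intro t ht
    have hs : supNorm E (P + C (t : ℂ)) = t := by
      rw [supNorm_congr (Q := C (t : ℂ)) (by simp +contextual [hvanish]),
        supNorm_C_of_nonempty hEne, Complex.norm_of_nonneg ht.le]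
    have h := supNorm_derivative_le_of_pos hM (P := P + C (t : ℂ)) (by rwa [hs])
    rwa [derivative_add, derivative_C, add_zero, natDegree_add_C, hs] at h
  rw [← h0, mul_zero]
  refine ge_of_tendsto (x := nhdsWithin 0 (Set.Ioi 0)) ?_ (eventually_nhdsWithin_of_forall hshift)
  exact tendsto_nhdsWithin_of_tendsto_nhds
    (by simpa using (continuous_const_mul (M * P.natDegree)).tendsto 0)

variable (hM0 : 0 ≤ M)
include hM0

lemma supNorm_hasseDeriv_le (hE : IsCompact E) (hEne : E.Nonempty) (P : ℂ[X]) (k : ℕ) :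
    supNorm E (hasseDeriv k P) ≤ P.natDegree.choose k * M ^ k * supNorm E P := by
  induction k with
  | zero => simp
  | succ k ih =>
    set d := P.natDegree
    have h := supNorm_derivative_le hM hE hEne (hasseDeriv k P)
    rw [derivative_hasseDeriv, ← Nat.cast_smul_eq_nsmul ℂ, supNorm_smul, natDegree_hasseDeriv,
      Complex.norm_natCast] at h
    have hchoose : (d.choose (k + 1) : ℝ) * (k + 1 : ℕ) = d.choose k * (d - k : ℕ) := by
      exact_mod_cast Nat.choose_succ_right_eq d k
    refine le_of_mul_le_mul_left ?_ (by positivity : (0 : ℝ) < (k + 1 : ℕ))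
    calc ((k + 1 : ℕ) : ℝ) * supNorm E (hasseDeriv (k + 1) P)
        ≤ M * (d - k : ℕ) * supNorm E (hasseDeriv k P) := h
      _ ≤ M * (d - k : ℕ) * (d.choose k * M ^ k * supNorm E P) := by gcongr
      _ = (k + 1 : ℕ) * (d.choose (k + 1) * M ^ (k + 1) * supNorm E P) := by
        rw [pow_succ]; linear_combination (M ^ k * M * supNorm E P) * hchoose.symm

lemma norm_eval_add_le (hE : IsCompact E) (hEne : E.Nonempty) (P : ℂ[X]) {z : ℂ} (hz : z ∈ E)
    (ζ : ℂ) : ‖P.eval (z + ζ)‖ ≤ (1 + M * ‖ζ‖) ^ P.natDegree * supNorm E P := by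
  set d := P.natDegree
  calc ‖P.eval (z + ζ)‖
      = ‖∑ i ∈ Finset.range (d + 1), (hasseDeriv i P).eval z * ζ ^ i‖ := by
        rw [add_comm, ← taylor_eval, eval_eq_sum_range, natDegree_taylor]
        simp only [taylor_coeff, d]
    _ ≤ ∑ i ∈ Finset.range (d + 1), ‖(hasseDeriv i P).eval z‖ * ‖ζ‖ ^ i := by
        refine (norm_sum_le _ _).trans_eq ?_
        simp only [norm_mul, norm_pow]
    _ ≤ ∑ i ∈ Finset.range (d + 1), d.choose i * M ^ i * supNorm E P * ‖ζ‖ ^ i := by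
        gcongr with i
        exact (norm_eval_le_supNorm hE _ hz).trans (supNorm_hasseDeriv_le hM hM0 hE hEne P i)
    _ = (1 + M * ‖ζ‖) ^ d * supNorm E P := by
        rw [add_comm (1 : ℝ), add_pow, Finset.sum_mul]
        refine Finset.sum_congr rfl fun i _ => ?_
        ring

lemma pow_mem_upperBounds_phiValues (hE : IsCompact E) (hEne : E.Nonempty) {r : ℝ} (hr : 0 ≤ r)
    (n : ℕ) : (1 + M * r) ^ n ∈ upperBounds (phiValues E n r) := by
  rintro _ ⟨P, z, ζ, hz, hζ, hd, hs, rfl⟩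
  have h1 : 1 ≤ 1 + M * r := by nlinarith
  calc ‖P.eval (z + ζ)‖ ≤ (1 + M * ‖ζ‖) ^ P.natDegree * supNorm E P :=
        norm_eval_add_le hM hM0 hE hEne P hz ζ
    _ ≤ (1 + M * r) ^ P.natDegree * 1 := by gcongr; exact zero_le_supNorm E P
    _ ≤ (1 + M * r) ^ n := by rw [mul_one]; exact pow_le_pow_right₀ h1 hd

end Bernstein

lemma exists_eval_add_eq_of_natDegree_le_one {P : ℂ[X]} (hP : P.natDegree ≤ 1) (z : ℂ) {r : ℝ}
    (hr : 0 ≤ r) : ∃ ζ : ℂ, ‖ζ‖ ≤ r * ‖P.eval z‖ ∧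
      P.eval (z + ζ) = P.eval z * ((1 + r * ‖P.coeff 1‖ : ℝ) : ℂ) := by
  set b := P.coeff 1
  have hPeval : ∀ w, P.eval w = b * w + P.coeff 0 := fun w => by
    rw [eq_X_add_C_of_natDegree_le_one hP]; simp [b]
  refine ⟨r * P.eval z * (starRingEnd ℂ b) / ‖b‖, ?_, ?_⟩
  · rw [norm_div, norm_mul, norm_mul, Complex.norm_of_nonneg hr, Complex.norm_conj,
      Complex.norm_of_nonneg (norm_nonneg b), mul_div_assoc]
    exact mul_le_of_le_one_right (by positivity) (div_self_le_one _)
  · have hbb : b * (r * P.eval z * starRingEnd ℂ b / ‖b‖) = r * P.eval z * ‖b‖ := by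
      rw [mul_div_assoc', mul_left_comm, Complex.mul_conj', sq, mul_div_assoc, mul_self_div_self]
    rw [hPeval (z + _), mul_add, hbb, hPeval z]
    push_cast
    ring

lemma pow_one_add_mul_le_phi {E : Set ℂ} (hE : IsCompact E) (hEne : E.Nonempty) {n : ℕ} {r : ℝ}
    (hr : 0 ≤ r) (hbdd : BddAbove (phiValues E n r))
    {P : ℂ[X]} (hP : P.natDegree ≤ 1) (hs : supNorm E P = 1) :
    (1 + supNorm E (derivative P) * r) ^ n ≤ phi E n r := by
  obtain ⟨z, hz, hzmax⟩ := exists_norm_eval_eq_supNorm hE hEne P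
  obtain ⟨ζ, hζ, hPζ⟩ := exists_eval_add_eq_of_natDegree_le_one hP z hr
  have hderiv : supNorm E (derivative P) = ‖P.coeff 1‖ := by
    rw [eq_X_add_C_of_natDegree_le_one hP]
    simp [supNorm_C_of_nonempty hEne]
  rw [phi_eq_sSup_phiValues]
  refine le_csSup hbdd ⟨P ^ n, z, ζ, hz, by simpa [hzmax, hs] using hζ, ?_, ?_, ?_⟩
  · exact natDegree_pow_le.trans (by nlinarith)
  · simpa [hs] using supNorm_pow_le hE P n
  · rw [eval_pow, norm_pow, hPζ, norm_mul, hzmax, hs, one_mul,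
      Complex.norm_of_nonneg (by positivity), hderiv, mul_comm r]

theorem stmt7_general (E : Set ℂ) (hE : IsCompact E) (hEne : E.Nonempty)
    (MB M₁ : ℝ)
    (hMB : MB = sSup {x : ℝ | ∃ P : Polynomial ℂ, 1 ≤ P.natDegree ∧
      supNorm E P = 1 ∧ x = supNorm E (Polynomial.derivative P) / (P.natDegree : ℝ)})
    (hMBfin : BddAbove {x : ℝ | ∃ P : Polynomial ℂ, 1 ≤ P.natDegree ∧
      supNorm E P = 1 ∧ x = supNorm E (Polynomial.derivative P) / (P.natDegree : ℝ)})
    (hM₁ : M₁ = sSup {x : ℝ | ∃ P : Polynomial ℂ, P.natDegree ≤ 1 ∧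
      supNorm E P = 1 ∧ x = supNorm E (Polynomial.derivative P)})
    (n : ℕ) (r : ℝ) (hr : 0 ≤ r) :
    (1 + M₁ * r) ^ n ≤ phi E n r ∧ phi E n r ≤ (1 + MB * r) ^ n := by
  have hM : ∀ P : ℂ[X], 1 ≤ P.natDegree → supNorm E P = 1 →
      supNorm E (derivative P) / P.natDegree ≤ MB :=
    fun P hd hs => hMB ▸ le_csSup hMBfin ⟨P, hd, hs, rfl⟩
  have hMB0 : 0 ≤ MB := by
    obtain ⟨P, hd, hs⟩ := exists_natDegree_eq_one_supNorm_eq_one hE hEne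
    exact (div_nonneg (zero_le_supNorm E _) (Nat.cast_nonneg _)).trans (hM P hd.ge hs)
  have hupper := pow_mem_upperBounds_phiValues hM hMB0 hE hEne hr n
  refine ⟨?_, (phi_eq_sSup_phiValues E n r).trans_le (Real.sSup_le hupper (by positivity))⟩
  set S₁ := {x : ℝ | ∃ P : Polynomial ℂ, P.natDegree ≤ 1 ∧
      supNorm E P = 1 ∧ x = supNorm E (Polynomial.derivative P)}
  have hlower : S₁ ⊆ {x | (1 + x * r) ^ n ≤ phi E n r} := by
    rintro _ ⟨P, hP, hs, rfl⟩
    exact pow_one_add_mul_le_phi hE hEne hr ⟨_, hupper⟩ hP hs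
  have h0 : (0 : ℝ) ∈ S₁ := ⟨1, by simp, by simpa using supNorm_C_of_nonempty hEne 1,
    by simpa using (supNorm_C_of_nonempty hEne 0).symm⟩
  by_cases hbdd : BddAbove S₁
  · have hclosed : IsClosed {x : ℝ | (1 + x * r) ^ n ≤ phi E n r} :=
      isClosed_le (by fun_prop) continuous_const
    exact hM₁ ▸ closure_minimal hlower hclosed (csSup_mem_closure ⟨0, h0⟩ hbdd)
  · simpa [hM₁, Real.sSup_of_not_bddAbove hbdd] using hlower h0

/-- if `E ⊂ ℂ` is a Bernstein set with constant
`M(E,1) = sup{‖P'‖_E/deg P : deg P ≥ 1, ‖P‖_E = 1}` and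
`M₁(E) = sup{‖P'‖_E : deg P ≤ 1, ‖P‖_E = 1}`, then
`(1 + M₁(E) r)^n ≤ φ_n(E,r) ≤ (1 + M(E,1) r)^n`. -/
theorem stmt7 (E : Set ℂ) (hE : IsCompact E) (hEne : E.Nonempty)
    (MB M₁ : ℝ)
    (hMB : MB = sSup {x : ℝ | ∃ P : Polynomial ℂ, 1 ≤ P.natDegree ∧
      supNorm E P = 1 ∧ x = supNorm E (Polynomial.derivative P) / (P.natDegree : ℝ)})
    (hMBfin : BddAbove {x : ℝ | ∃ P : Polynomial ℂ, 1 ≤ P.natDegree ∧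
      supNorm E P = 1 ∧ x = supNorm E (Polynomial.derivative P) / (P.natDegree : ℝ)})
    (hM₁ : M₁ = sSup {x : ℝ | ∃ P : Polynomial ℂ, P.natDegree ≤ 1 ∧
      supNorm E P = 1 ∧ x = supNorm E (Polynomial.derivative P)})
    (n : ℕ) (hn : 1 ≤ n) (r : ℝ) (hr : 0 ≤ r) :
    (1 + M₁ * r) ^ n ≤ phi E n r ∧ phi E n r ≤ (1 + MB * r) ^ n :=
  stmt7_general E hE hEne MB M₁ hMB hMBfin hM₁ n r hr
end

section
/- Let q be a norm on complex polynomials of one variable such that the Markov factors M_q(n,k) := sup{ ‖P^{(k)}‖ : deg P ≤ n, ‖P‖ = 1 } belong to the class 𝒦𝓛 with constant C. If moreover M_q(n,1) ≤ M n^m for all n (A. Markov property) and M_q(n,n) ≤ A^n n! for all n, then q has the V. Markov property: there exist constants M' > 0, m' ≥ 1 such that M_q(n,k) ≤ (M')^k n^{km'} / (k!)^{m'-1} for all 1 ≤ k ≤ n. -/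
open Polynomial Real

/-- The Markov factor `M_q(n,k) = sup{ q(P^{(k)}) : deg P ≤ n, q(P) = 1 }`. -/
noncomputable def markovFactor (q : Polynomial ℂ → ℝ) (n k : ℕ) : ℝ :=
  sSup {x : ℝ | ∃ P : Polynomial ℂ, P.natDegree ≤ n ∧ q P = 1 ∧
    x = q ((Polynomial.derivative)^[k] P)}

private lemma log_le_log_aux {x y : ℝ} (hx : 0 ≤ x) (hxy : x ≤ y) (hy : 1 ≤ y) :
    Real.log x ≤ Real.log y := by
  rcases eq_or_lt_of_le hx with h | h
  · rw [← h, Real.log_zero]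
    exact Real.log_nonneg hy
  · exact Real.log_le_log h hxy

set_option maxHeartbeats 1000000 in
/-- if the Markov factors of a norm `q` belong to the class `𝒦𝓛`
with constant `C`, and `M_q(n,1) ≤ M n^m` (A. Markov) and `M_q(n,n) ≤ A^n n!`,
then `q` has the V. Markov property. -/
theorem stmt15 (q : Polynomial ℂ → ℝ)
    (hq_add : ∀ P Q, q (P + Q) ≤ q P + q Q)
    (hq_smul : ∀ (c : ℂ) P, q (c • P) = ‖c‖ * q P)
    (hq_eq : ∀ P, q P = 0 ↔ P = 0)
    (C : ℝ) (hC : 0 < C)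
    (hKL : ∀ n : ℕ, 2 ≤ n → ∀ k : ℕ, 1 ≤ k → k ≤ n →
      Real.log ((markovFactor q n k) ^ ((1 : ℝ) / (k : ℝ))) ≤
        Real.log C +
          (1 - Real.log k / Real.log n) *
            Real.log ((markovFactor q n 1) ^ ((1 : ℝ) / (1 : ℝ))) +
          (Real.log k / Real.log n) *
            Real.log ((markovFactor q n n) ^ ((1 : ℝ) / (n : ℝ))))
    (M m : ℝ) (hM : 0 < M) (hm : 1 ≤ m)
    (hAM : ∀ n : ℕ, 1 ≤ n → markovFactor q n 1 ≤ M * (n : ℝ) ^ m)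
    (A : ℝ) (hA : 0 < A)
    (hnn : ∀ n : ℕ, 1 ≤ n → markovFactor q n n ≤ A ^ n * (Nat.factorial n : ℝ)) :
    ∃ M' : ℝ, 0 < M' ∧ ∃ m' : ℝ, 1 ≤ m' ∧
      ∀ n k : ℕ, 1 ≤ k → k ≤ n →
        markovFactor q n k ≤
          M' ^ k * (n : ℝ) ^ ((k : ℝ) * m') / (Nat.factorial k : ℝ) ^ (m' - 1) := by
  -- q is nonnegative
  have hq0 : q 0 = 0 := by
    have h := hq_smul 0 0
    simpa using h
  have hqnn : ∀ P, 0 ≤ q P := by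
    intro P
    have h1 : q (P + (-1 : ℂ) • P) ≤ q P + q ((-1 : ℂ) • P) := hq_add _ _
    have h2 : q ((-1 : ℂ) • P) = q P := by rw [hq_smul]; simp
    have h3 : P + (-1 : ℂ) • P = 0 := by simp
    rw [h3, hq0, h2] at h1
    linarith
  have hFnn : ∀ n k : ℕ, 0 ≤ markovFactor q n k := by
    intro n k
    apply Real.sSup_nonneg
    rintro x ⟨P, -, -, rfl⟩
    exact hqnn _
  set C' := max C 1 with hC'
  set M₁ := max M 1 with hM₁
  set A₁ := max A 1 with hA₁
  have hC'1 : (1:ℝ) ≤ C' := le_max_right _ _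
  have hM₁1 : (1:ℝ) ≤ M₁ := le_max_right _ _
  have hA₁1 : (1:ℝ) ≤ A₁ := le_max_right _ _
  refine ⟨C' * M₁ * A₁, by positivity, m, hm, ?_⟩
  set M' := C' * M₁ * A₁ with hM'
  have hM'1 : (1:ℝ) ≤ M' := by
    calc (1:ℝ) = 1 * 1 * 1 := by ring
    _ ≤ C' * M₁ * A₁ := by
        apply mul_le_mul (mul_le_mul hC'1 hM₁1 zero_le_one (by linarith)) hA₁1 zero_le_one
        nlinarith
  have hMM' : M ≤ M' := by
    calc M ≤ M₁ := le_max_left _ _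
    _ = 1 * M₁ * 1 := by ring
    _ ≤ C' * M₁ * A₁ := by
        apply mul_le_mul (mul_le_mul hC'1 le_rfl (by linarith) (by linarith)) hA₁1
          zero_le_one (by nlinarith)
  intro n k hk hkn
  have hn1 : 1 ≤ n := le_trans hk hkn
  have hnR : (1:ℝ) ≤ (n:ℝ) := by exact_mod_cast hn1
  have hkR : (1:ℝ) ≤ (k:ℝ) := by exact_mod_cast hk
  have hnpos : (0:ℝ) < n := by linarith
  have hkpos : (0:ℝ) < k := by linarith
  have hfactpos : (0:ℝ) < (Nat.factorial k : ℝ) := by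
    exact_mod_cast Nat.factorial_pos k
  have hRHSpos : 0 < M' ^ k * (n : ℝ) ^ ((k : ℝ) * m) / (Nat.factorial k : ℝ) ^ (m - 1) := by
    have h1:(0:ℝ) < M' := by linarith
    positivity
  rcases lt_or_ge n 2 with hn2 | hn2
  · -- n = 1, k = 1
    have hn : n = 1 := le_antisymm (by omega) hn1
    have hkk : k = 1 := by omega
    subst hn; subst hkk
    have h := hAM 1 le_rfl
    simp only [Nat.cast_one, Real.one_rpow, Nat.factorial_one, pow_one, mul_one,
      div_one] at h ⊢
    exact le_trans h hMM'
  · -- main case: n ≥ 2; use the KL interpolation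
    rcases le_or_gt (markovFactor q n k) 0 with hF | hF
    · linarith
    set Fk := markovFactor q n k with hFk
    set F1 := markovFactor q n 1 with hF1
    set Fn := markovFactor q n n with hFn
    have hn2R : (2:ℝ) ≤ (n:ℝ) := by exact_mod_cast hn2
    have hlnpos : 0 < Real.log n := Real.log_pos (by linarith)
    have hlk0 : 0 ≤ Real.log k := Real.log_nonneg hkR
    have hlkln : Real.log k ≤ Real.log n :=
      Real.log_le_log hkpos (by exact_mod_cast hkn)
    have key := hKL n hn2 k hk hkn
    -- LHS rewrite
    rw [Real.log_rpow hF] at key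
    -- bound the F1 term
    have hb1 : Real.log (F1 ^ ((1:ℝ)/(1:ℝ))) ≤ Real.log M₁ + m * Real.log n := by
      rw [show ((1:ℝ)/(1:ℝ)) = 1 by norm_num, Real.rpow_one]
      have h1 : F1 ≤ M₁ * (n:ℝ) ^ m := by
        calc F1 ≤ M * (n:ℝ) ^ m := hAM n hn1
        _ ≤ M₁ * (n:ℝ) ^ m := by
            apply mul_le_mul_of_nonneg_right (le_max_left _ _)
            positivity
      have h2 : (1:ℝ) ≤ M₁ * (n:ℝ) ^ m := by
        have : (1:ℝ) ≤ (n:ℝ) ^ m := Real.one_le_rpow hnR (by linarith)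
        nlinarith
      calc Real.log F1 ≤ Real.log (M₁ * (n:ℝ) ^ m) := log_le_log_aux (hFnn n 1) h1 h2
      _ = Real.log M₁ + m * Real.log n := by
          rw [Real.log_mul (by positivity) (by positivity), Real.log_rpow hnpos]
    -- bound the Fn term
    have hb2 : Real.log (Fn ^ ((1:ℝ)/(n:ℝ))) ≤ Real.log A₁ + Real.log n := by
      have h1 : Fn ≤ (A₁ * n) ^ n := by
        calc Fn ≤ A ^ n * (Nat.factorial n : ℝ) := hnn n hn1
        _ ≤ A₁ ^ n * (n:ℝ) ^ n := by
            apply mul_le_mul (pow_le_pow_left₀ hA.le (le_max_left _ _) n)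
              (by exact_mod_cast Nat.factorial_le_pow n)
              (by positivity) (by positivity)
        _ = (A₁ * n) ^ n := by rw [mul_pow]
      have h2 : Fn ^ ((1:ℝ)/(n:ℝ)) ≤ A₁ * n := by
        have hstep : Fn ^ ((1:ℝ)/(n:ℝ)) ≤ ((A₁ * n) ^ n) ^ ((1:ℝ)/(n:ℝ)) :=
          Real.rpow_le_rpow (hFnn n n) h1 (by positivity)
        calc Fn ^ ((1:ℝ)/(n:ℝ)) ≤ ((A₁ * n) ^ n) ^ ((1:ℝ)/(n:ℝ)) := hstep
        _ = A₁ * n := by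
            rw [← Real.rpow_natCast (A₁ * (n:ℝ)) n, ← Real.rpow_mul (by positivity)]
            rw [mul_one_div, div_self (by positivity : (n:ℝ) ≠ 0), Real.rpow_one]
      have h3 : (1:ℝ) ≤ A₁ * n := by nlinarith
      calc Real.log (Fn ^ ((1:ℝ)/(n:ℝ))) ≤ Real.log (A₁ * n) :=
            log_le_log_aux (Real.rpow_nonneg (hFnn n n) _) h2 h3
      _ = Real.log A₁ + Real.log n := Real.log_mul (by positivity) (by positivity)
    have hs0 : 0 ≤ Real.log k / Real.log n := by positivity
    have hs1 : Real.log k / Real.log n ≤ 1 := by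
      rw [div_le_one hlnpos]; exact hlkln
    have hsl : (Real.log k / Real.log n) * Real.log n = Real.log k := by
      field_simp
    have hlogC : Real.log C ≤ Real.log C' := Real.log_le_log hC (le_max_left _ _)
    have hlogM₁ : 0 ≤ Real.log M₁ := Real.log_nonneg hM₁1
    have hlogA₁ : 0 ≤ Real.log A₁ := Real.log_nonneg hA₁1
    -- combine
    have key2 : ((1:ℝ)/(k:ℝ)) * Real.log Fk ≤
        Real.log C' + (1 - Real.log k / Real.log n) * (Real.log M₁ + m * Real.log n)
          + (Real.log k / Real.log n) * (Real.log A₁ + Real.log n) := by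
      have t1 : (1 - Real.log k / Real.log n) * Real.log (F1 ^ ((1:ℝ)/(1:ℝ))) ≤
          (1 - Real.log k / Real.log n) * (Real.log M₁ + m * Real.log n) :=
        mul_le_mul_of_nonneg_left hb1 (by linarith)
      have t2 : (Real.log k / Real.log n) * Real.log (Fn ^ ((1:ℝ)/(n:ℝ))) ≤
          (Real.log k / Real.log n) * (Real.log A₁ + Real.log n) :=
        mul_le_mul_of_nonneg_left hb2 hs0
      linarith
    have key3 : Real.log Fk ≤ (k:ℝ) * Real.log M' + (k:ℝ) * m * Real.log n
        - (m - 1) * ((k:ℝ) * Real.log k) := by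
      have hmul := mul_le_mul_of_nonneg_left key2 (le_of_lt hkpos)
      rw [← mul_assoc, mul_one_div, div_self (ne_of_gt hkpos), one_mul] at hmul
      have hexp : (k:ℝ) * (Real.log C' + (1 - Real.log k / Real.log n) *
            (Real.log M₁ + m * Real.log n)
          + (Real.log k / Real.log n) * (Real.log A₁ + Real.log n)) ≤
          (k:ℝ) * Real.log M' + (k:ℝ) * m * Real.log n - (m - 1) * ((k:ℝ) * Real.log k) := by
        have hlogM' : Real.log M' = Real.log C' + Real.log M₁ + Real.log A₁ := by
          rw [hM', Real.log_mul (by positivity) (by positivity),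
            Real.log_mul (by positivity) (by positivity)]
        rw [hlogM']
        set s := Real.log k / Real.log n with hsdef
        have hsn : s * Real.log n = Real.log k := hsl
        have expand : (k:ℝ) * (Real.log C' + (1 - s) * (Real.log M₁ + m * Real.log n)
              + s * (Real.log A₁ + Real.log n))
            = (k:ℝ) * (Real.log C' + Real.log M₁ + Real.log A₁)
              + (k:ℝ) * m * Real.log n - (m - 1) * ((k:ℝ) * Real.log k)
              - (k:ℝ) * s * Real.log M₁ - (k:ℝ) * (1 - s) * Real.log A₁ := by
          linear_combination ((1 - m) * (k:ℝ)) * hsn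
        have p1 : 0 ≤ (k:ℝ) * s * Real.log M₁ :=
          mul_nonneg (mul_nonneg hkpos.le hs0) hlogM₁
        have p2 : 0 ≤ (k:ℝ) * (1 - s) * Real.log A₁ :=
          mul_nonneg (mul_nonneg hkpos.le (by linarith)) hlogA₁
        linarith [expand.le]
      exact le_trans hmul hexp
    -- log of RHS
    have hlogfact : Real.log (Nat.factorial k : ℝ) ≤ (k:ℝ) * Real.log k := by
      calc Real.log (Nat.factorial k : ℝ) ≤ Real.log ((k:ℝ) ^ k) :=
            Real.log_le_log hfactpos (by exact_mod_cast Nat.factorial_le_pow k)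
      _ = (k:ℝ) * Real.log k := by rw [Real.log_pow]
    have hlogRHS : Real.log (M' ^ k * (n : ℝ) ^ ((k : ℝ) * m) /
        (Nat.factorial k : ℝ) ^ (m - 1)) =
        (k:ℝ) * Real.log M' + (k:ℝ) * m * Real.log n
          - (m - 1) * Real.log (Nat.factorial k : ℝ) := by
      rw [Real.log_div (by positivity) (by positivity),
        Real.log_mul (by positivity) (by positivity), Real.log_pow,
        Real.log_rpow hnpos, Real.log_rpow hfactpos]
    have hfinal : Real.log Fk ≤ Real.log (M' ^ k * (n : ℝ) ^ ((k : ℝ) * m) /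
        (Nat.factorial k : ℝ) ^ (m - 1)) := by
      rw [hlogRHS]
      have : (m - 1) * Real.log (Nat.factorial k : ℝ) ≤ (m - 1) * ((k:ℝ) * Real.log k) :=
        mul_le_mul_of_nonneg_left hlogfact (by linarith)
      linarith
    calc Fk = Real.exp (Real.log Fk) := (Real.exp_log hF).symm
    _ ≤ Real.exp (Real.log (M' ^ k * (n : ℝ) ^ ((k : ℝ) * m) /
          (Nat.factorial k : ℝ) ^ (m - 1))) := Real.exp_le_exp.mpr hfinal
    _ = _ := Real.exp_log hRHSpos
end
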